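/- arXiv:2304.01748 — 12 statements merged into one kernel-verified Lean document; each statement's English description precedes it below -/
import Mathlib

section
/- Let a, b, s, θ be real numbers and let C be the 4×4 complex matrix whose only nonzero entries are the diagonal entries C₁₁ = (1 − s + e^{−a})/2, C₂₂ = (1 + s − e^{−a})/2, C₃₃ = (1 − s − e^{−a})/2, C₄₄ = (1 + s + e^{−a})/2 and the off-diagonal entries C₁₄ = e^{−b}·e^{−iθ} and C₄₁ = e^{−b}·e^{iθ}. Then C is positive semidefinite if and only if |s| ≤ 1 − e^{−a} and s² ≤ (1 + e^{−a})² − 4e^{−2b}. -/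
/-!
Reordering the basis as (1, 4, 2, 3) turns `C` into a block-diagonal matrix with the 2×2 block
`[[C₁₁, C₁₄], [C₄₁, C₄₄]]` and the scalars `C₂₂`, `C₃₃`. A Hermitian 2×2 matrix is positive
semidefinite iff its diagonal entries and its determinant are nonnegative; here the determinant is
`((1 + e^{-a})² - s²) / 4 - e^{-2b}`, and `C₂₂, C₃₃ ≥ 0` is `|s| ≤ 1 - e^{-a}`.
-/

open Real Complex Matrix
open scoped ComplexOrder

namespace Matrix

section Blocks

variable {m n R : Type*} [Fintype m] [Fintype n] [Ring R] [PartialOrder R] [StarRing R]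

theorem posSemidef_fromBlocks_zero_iff [AddLeftMono R] {A : Matrix m m R} {D : Matrix n n R} :
    (fromBlocks A 0 0 D).PosSemidef ↔ A.PosSemidef ∧ D.PosSemidef := by
  refine ⟨fun h ↦ ⟨h.submatrix Sum.inl, h.submatrix Sum.inr⟩, fun ⟨hA, hD⟩ ↦ ?_⟩
  refine .of_dotProduct_mulVec_nonneg (hA.isHermitian.fromBlocks (by simp) hD.isHermitian)
    fun x ↦ ?_
  rw [← Sum.elim_comp_inl_inr x, Function.star_sumElim, fromBlocks_mulVec]
  simpa using add_nonneg (hA.dotProduct_mulVec_nonneg _) (hD.dotProduct_mulVec_nonneg _)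

theorem posSemidef_fin_four_corners_iff [StarOrderedRing R] (α β γ δ z w : R) :
    (!![α, 0, 0, z; 0, β, 0, 0; 0, 0, γ, 0; w, 0, 0, δ]).PosSemidef ↔
      (!![α, z; w, δ]).PosSemidef ∧ 0 ≤ β ∧ 0 ≤ γ := by
  have hblocks : (!![α, 0, 0, z; 0, β, 0, 0; 0, 0, γ, 0; w, 0, 0, δ]).submatrix
      (finSumFinEquiv.trans (Equiv.swap 1 3)) (finSumFinEquiv.trans (Equiv.swap 1 3)) =
      fromBlocks !![α, z; w, δ] 0 0 (diagonal ![γ, β]) := by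
    ext (i | i) (j | j) <;> fin_cases i <;> fin_cases j <;> rfl
  rw [← posSemidef_submatrix_equiv, hblocks, posSemidef_fromBlocks_zero_iff,
    posSemidef_diagonal_iff, Fin.forall_fin_two]
  simp [and_comm]

end Blocks

theorem posSemidef_fin_two_iff {𝕜 : Type*} [RCLike 𝕜] (a d : ℝ) (z : 𝕜) :
    (!![(a : 𝕜), z; star z, (d : 𝕜)]).PosSemidef ↔ 0 ≤ a ∧ 0 ≤ d ∧ ‖z‖ ^ 2 ≤ a * d := by
  constructor
  · intro h
    have ha : 0 ≤ (a : 𝕜) := h.diag_nonneg (i := 0)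
    have hd : 0 ≤ (d : 𝕜) := h.diag_nonneg (i := 1)
    have hdet := h.det_nonneg
    rw [det_fin_two_of, RCLike.star_def, RCLike.mul_conj] at hdet
    exact ⟨RCLike.ofReal_nonneg.1 ha, RCLike.ofReal_nonneg.1 hd,
      by exact_mod_cast sub_nonneg.1 hdet⟩
  · rintro ⟨ha, hd, hz⟩
    rcases ha.eq_or_lt with rfl | ha
    · obtain rfl : z = 0 := by simpa using (show ‖z‖ ^ 2 ≤ 0 by simpa using hz)
      have hdiag : !![((0 : ℝ) : 𝕜), 0; star 0, (d : 𝕜)] = diagonal ![0, (d : 𝕜)] := by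
        ext i j; fin_cases i <;> fin_cases j <;> simp
      rw [hdiag, posSemidef_diagonal_iff]
      intro i; fin_cases i <;> simp [hd]
    -- a rank-one matrix `v vᴴ` carrying the first row, plus the Schur complement `d - |z|²/a`
    · set v : Fin 2 → 𝕜 := ![(√a : 𝕜), star z / (√a : 𝕜)]
      have hsqrt : ((√a : ℝ) : 𝕜) ^ 2 = a := by exact_mod_cast Real.sq_sqrt ha.le
      have hsqrt0 : ((√a : ℝ) : 𝕜) ≠ 0 := by simpa using (Real.sqrt_pos.2 ha).ne'
      have hsplit : !![(a : 𝕜), z; star z, (d : 𝕜)] =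
          vecMulVec v (star v) + diagonal ![0, ((d - ‖z‖ ^ 2 / a : ℝ) : 𝕜)] := by
        ext i j; fin_cases i <;> fin_cases j <;> simp [v, vecMulVec] <;> field_simp
        · exact hsqrt.symm
        · rw [RCLike.conj_mul, hsqrt, RCLike.algebraMap_eq_ofReal]
          ring
      rw [hsplit]
      refine (posSemidef_vecMulVec_self_star v).add (.diagonal fun i ↦ ?_)
      fin_cases i
      · simp
      · refine RCLike.ofReal_nonneg.2 ?_
        rwa [sub_nonneg, div_le_iff₀ ha, mul_comm]

end Matrix

/-- The Choi matrix of the dynamical map of a two-level open quantum system is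
positive semidefinite iff `|s| ≤ 1 - e^{-a}` and `s² ≤ (1 + e^{-a})² - 4 e^{-2b}`. -/
theorem choi_posSemidef_iff (a b s θ : ℝ)
    (C : Matrix (Fin 4) (Fin 4) ℂ)
    (hC : C = !![(((1 - s + Real.exp (-a)) / 2 : ℝ) : ℂ), 0, 0,
                  (Real.exp (-b) : ℂ) * Complex.exp (-(θ : ℂ) * Complex.I);
                 0, (((1 + s - Real.exp (-a)) / 2 : ℝ) : ℂ), 0, 0;
                 0, 0, (((1 - s - Real.exp (-a)) / 2 : ℝ) : ℂ), 0;
                 (Real.exp (-b) : ℂ) * Complex.exp ((θ : ℂ) * Complex.I), 0, 0,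
                  (((1 + s + Real.exp (-a)) / 2 : ℝ) : ℂ)]) :
    C.PosSemidef ↔
      |s| ≤ 1 - Real.exp (-a) ∧
      s ^ 2 ≤ (1 + Real.exp (-a)) ^ 2 - 4 * Real.exp (-(2 * b)) := by
  have hE : 0 < Real.exp (-a) := Real.exp_pos _
  have hstar : (Real.exp (-b) : ℂ) * Complex.exp ((θ : ℂ) * Complex.I) =
      star ((Real.exp (-b) : ℂ) * Complex.exp (-(θ : ℂ) * Complex.I)) := by
    simp [← Complex.exp_conj]
  have hnorm : ‖(Real.exp (-b) : ℂ) * Complex.exp (-(θ : ℂ) * Complex.I)‖ ^ 2 =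
      Real.exp (-(2 * b)) := by
    rw [norm_mul, ← Complex.ofReal_neg, Complex.norm_exp_ofReal_mul_I, mul_one,
      Complex.norm_of_nonneg (Real.exp_pos _).le, ← Real.exp_nat_mul]
    ring_nf
  rw [hC, hstar, posSemidef_fin_four_corners_iff]
  refine (and_congr_left' (posSemidef_fin_two_iff ((1 - s + Real.exp (-a)) / 2)
    ((1 + s + Real.exp (-a)) / 2) _)).trans ?_
  simp only [hnorm, Complex.zero_le_real, abs_le]
  constructor
  · rintro ⟨⟨-, -, h⟩, hβ, hγ⟩
    exact ⟨⟨by linarith, by linarith⟩, by nlinarith⟩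
  · rintro ⟨⟨h₁, h₂⟩, h⟩
    exact ⟨⟨by linarith, by linarith, by nlinarith⟩, by linarith, by linarith⟩
end

section
/- Let a, b, s be real numbers with a ≥ 0 and b ≥ 0 such that s² ≤ (1 − e^{−a})² if a ≤ 2b, and s² ≤ (1 + e^{−a})² − 4e^{−2b} if a ≥ 2b. Then for all real numbers x₀, y₀, z₀ with x₀² + y₀² + z₀² ≤ 1, one has e^{−2b}(x₀² + y₀²) + (s + z₀e^{−a})² ≤ 1. (A completely positive dynamical map of the two-level system is positive.) -/
lemma key1 (E D s z r2 : ℝ) (hE0 : 0 < E) (hE1 : E ≤ 1) (hD0 : 0 < D)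
    (hDE : D ≤ E) (hs : s ^ 2 ≤ (1 - E) ^ 2) (hr2 : 0 ≤ r2)
    (hr : r2 + z ^ 2 ≤ 1) :
    D * r2 + (s + z * E) ^ 2 ≤ 1 := by
  have hz : z ^ 2 ≤ 1 := by nlinarith
  have h0 : D * r2 ≤ D * (1 - z ^ 2) := by nlinarith
  have h1 : D * (1 - z ^ 2) ≤ E * (1 - z ^ 2) := by nlinarith
  rcases eq_or_lt_of_le hE1 with hE | hE
  · have hs0 : s = 0 := by nlinarith [sq_nonneg s]
    have hDr : D * r2 ≤ r2 := by nlinarith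
    rw [hs0, hE]
    nlinarith
  · -- E < 1, show E*(1-z^2) + (s+z*E)^2 ≤ 1
    have hid : (1 - E) * (1 - E * (1 - z ^ 2) - (s + z * E) ^ 2)
        = E * ((1 - E) * z - s) ^ 2 + ((1 - E) ^ 2 - s ^ 2) := by ring
    have hpos : 0 ≤ (1 - E) * (1 - E * (1 - z ^ 2) - (s + z * E) ^ 2) := by
      rw [hid]
      have := mul_nonneg hE0.le (sq_nonneg ((1 - E) * z - s))
      linarith
    have hg : 0 ≤ 1 - E * (1 - z ^ 2) - (s + z * E) ^ 2 := by
      by_contra hcon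
      push_neg at hcon
      nlinarith
    linarith

lemma key2 (E D s z r2 : ℝ) (hE0 : 0 < E) (hE1 : E ≤ 1) (hD0 : 0 < D) (hD1 : D ≤ 1)
    (hED : E ≤ D) (hs : s ^ 2 ≤ (1 + E) ^ 2 - 4 * D) (hr2 : 0 ≤ r2)
    (hr : r2 + z ^ 2 ≤ 1) :
    D * r2 + (s + z * E) ^ 2 ≤ 1 := by
  have hz : z ^ 2 ≤ 1 := by nlinarith
  have h0 : D * r2 ≤ D * (1 - z ^ 2) := by nlinarith
  have hc : E ^ 2 ≤ D := by nlinarith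
  rcases eq_or_lt_of_le hc with hc' | hc'
  · -- D = E^2, forces E = 1, D = 1, s = 0
    have hE1' : 1 ≤ E := by nlinarith
    have hEeq : E = 1 := le_antisymm hE1 hE1'
    have hDeq : D = 1 := by rw [← hc', hEeq]; ring
    have hs0 : s = 0 := by
      have : s ^ 2 ≤ 0 := by rw [hEeq, hDeq] at hs; linarith
      nlinarith [sq_nonneg s]
    rw [hEeq, hDeq, hs0]; nlinarith
  · set c := D - E ^ 2 with hcdef
    have hcpos : 0 < c := by simp [hcdef]; linarith
    have hkey : s ^ 2 * D ≤ c * (1 - D) := by nlinarith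
    have hid : c * (1 - D * (1 - z ^ 2) - (s + z * E) ^ 2)
        = (c * z - s * E) ^ 2 + (c * (1 - D) - s ^ 2 * D) := by
      simp only [hcdef]; ring
    have hpos : 0 ≤ c * (1 - D * (1 - z ^ 2) - (s + z * E) ^ 2) := by
      rw [hid]; have := sq_nonneg (c * z - s * E); linarith
    have hg : 0 ≤ 1 - D * (1 - z ^ 2) - (s + z * E) ^ 2 := by
      by_contra hcon
      push_neg at hcon
      nlinarith
    linarith

/-- A completely positive dynamical map of the two-level system is positive:
under the CP conditions, the image of the closed unit (Bloch) ball lies in the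
closed unit ball. -/
theorem cp_implies_positive (a b s : ℝ) (ha : 0 ≤ a) (hb : 0 ≤ b)
    (h1 : a ≤ 2 * b → s ^ 2 ≤ (1 - Real.exp (-a)) ^ 2)
    (h2 : 2 * b ≤ a → s ^ 2 ≤ (1 + Real.exp (-a)) ^ 2 - 4 * Real.exp (-(2 * b))) :
    ∀ x₀ y₀ z₀ : ℝ, x₀ ^ 2 + y₀ ^ 2 + z₀ ^ 2 ≤ 1 →
      Real.exp (-(2 * b)) * (x₀ ^ 2 + y₀ ^ 2) + (s + z₀ * Real.exp (-a)) ^ 2 ≤ 1 := by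
  intro x₀ y₀ z₀ hball
  set E := Real.exp (-a) with hEdef
  set D := Real.exp (-(2 * b)) with hDdef
  have hE0 : 0 < E := Real.exp_pos _
  have hD0 : 0 < D := Real.exp_pos _
  have hE1 : E ≤ 1 := Real.exp_le_one_iff.2 (by linarith)
  have hD1 : D ≤ 1 := Real.exp_le_one_iff.2 (by linarith)
  have hr2 : 0 ≤ x₀ ^ 2 + y₀ ^ 2 := by positivity
  rcases le_total a (2 * b) with hc | hc
  · have hDE : D ≤ E := Real.exp_le_exp.2 (by linarith)
    exact key1 E D s z₀ _ hE0 hE1 hD0 hDE (h1 hc) hr2 hball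
  · have hED : E ≤ D := Real.exp_le_exp.2 (by linarith)
    exact key2 E D s z₀ _ hE0 hE1 hD0 hD1 hED (h2 hc) hr2 hball
end

section
/- Let a, b, s be real numbers. Then the implication 'for all real x₀, y₀, z₀ with x₀² + y₀² + z₀² ≤ 1 one has e^{−2b}(x₀² + y₀²) + (s + z₀e^{−a})² ≤ 1' holds if and only if the following conditions hold: a ≥ 0, b ≥ 0, s² ≤ (1 − e^{−a})² whenever a ≤ 2b, and s² ≤ (1 − e^{−2b})(1 − e^{−2(a−b)}) whenever a ≥ 2b. -/
set_option maxHeartbeats 2000000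

lemma pos_aux (p q r s : ℝ) (hp0 : 0 < p) (hq0 : 0 < q) (hpr : p * r = q ^ 2) :
    (∀ x y z : ℝ, x ^ 2 + y ^ 2 + z ^ 2 ≤ 1 →
      p * (x ^ 2 + y ^ 2) + (s + z * q) ^ 2 ≤ 1) ↔
    (q ≤ 1 ∧ p ≤ 1 ∧ (p ≤ q → s ^ 2 ≤ (1 - q) ^ 2) ∧
      (q ≤ p → s ^ 2 ≤ (1 - p) * (1 - r))) := by
  constructor
  · intro H
    have hA : (s + q) ^ 2 ≤ 1 := by
      have := H 0 0 1 (by norm_num); nlinarith [this]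
    have hB : (s - q) ^ 2 ≤ 1 := by
      have := H 0 0 (-1) (by norm_num); nlinarith [this]
    have hC : p + s ^ 2 ≤ 1 := by
      have := H 1 0 0 (by norm_num); nlinarith [this]
    have hq1 : q ≤ 1 := by nlinarith [sq_nonneg (s + q), sq_nonneg (s - q)]
    have hp1 : p ≤ 1 := by nlinarith [sq_nonneg s]
    have habs2 : (|s| + q) ^ 2 ≤ 1 := by
      rcases abs_cases s with ⟨h, _⟩ | ⟨h, _⟩ <;> rw [h] <;> nlinarith
    have habs : |s| + q ≤ 1 := by nlinarith [abs_nonneg s]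
    have hs1 : s ^ 2 ≤ (1 - q) ^ 2 := by nlinarith [sq_abs s, abs_nonneg s]
    refine ⟨hq1, hp1, fun _ => hs1, fun hqp => ?_⟩
    by_cases hdq : q ^ 2 < p
    · have hd : (0:ℝ) < p - q ^ 2 := by linarith
      by_cases hsm : |s| * q ≤ p - q ^ 2
      · obtain ⟨z₀, hz₀⟩ : ∃ z₀ : ℝ, z₀ * (p - q ^ 2) = s * q :=
          ⟨s * q / (p - q ^ 2), by field_simp⟩
        have hsq : |s * q| ≤ p - q ^ 2 := by
          rw [abs_mul, abs_of_pos hq0]; exact hsm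
        have h1 : (s * q) ^ 2 ≤ (p - q ^ 2) ^ 2 := by
          nlinarith [sq_abs (s * q), abs_nonneg (s * q)]
        have hz₀2 : z₀ ^ 2 ≤ 1 := by
          have h1' : z₀ ^ 2 * (p - q ^ 2) ^ 2 ≤ (p - q ^ 2) ^ 2 := by
            have : (z₀ * (p - q ^ 2)) ^ 2 ≤ (p - q ^ 2) ^ 2 := by rw [hz₀]; exact h1
            nlinarith [this]
          nlinarith [pow_pos hd 2]
        have hx : (0:ℝ) ≤ 1 - z₀ ^ 2 := by linarith
        have hW : p * (1 - z₀ ^ 2) + (s + z₀ * q) ^ 2 ≤ 1 := by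
          have := H (Real.sqrt (1 - z₀ ^ 2)) 0 z₀ (by rw [Real.sq_sqrt hx]; norm_num)
          rw [Real.sq_sqrt hx] at this
          nlinarith [this]
        have expand : (p * (1 - z₀ ^ 2) + (s + z₀ * q) ^ 2) * (p - q ^ 2) ^ 2
            = p * (p - q ^ 2) ^ 2 - p * (z₀ * (p - q ^ 2)) ^ 2
              + (s * (p - q ^ 2) + (z₀ * (p - q ^ 2)) * q) ^ 2 := by ring
        rw [hz₀] at expand
        have h2 : p * (p - q ^ 2) ^ 2 - p * (s * q) ^ 2 + (s * (p - q ^ 2) + s * q * q) ^ 2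
            ≤ (p - q ^ 2) ^ 2 := by
          rw [← expand]
          nlinarith [hW, sq_nonneg (p - q ^ 2)]
        have h5 : s ^ 2 * p * (p - q ^ 2) ≤ (1 - p) * (p - q ^ 2) ^ 2 := by nlinarith [h2]
        have h6 : s ^ 2 * p ≤ (1 - p) * (1 - r) * p := by
          have h7 : (1 - p) * (p - q ^ 2) = (1 - p) * (1 - r) * p := by
            rw [← hpr]; ring
          nlinarith [h5]
        nlinarith [h6]
      · exfalso
        push_neg at hsm
        nlinarith [habs, abs_nonneg s, mul_le_mul_of_nonneg_right
          (by linarith [habs] : |s| ≤ 1 - q) hq0.le]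
    · push_neg at hdq
      have hq2 : q = 1 := le_antisymm hq1 (by nlinarith)
      have hpp : p = 1 := le_antisymm hp1 (by nlinarith)
      subst hq2; subst hpp
      have hss : s ^ 2 ≤ 0 := by nlinarith [sq_abs s, abs_nonneg s]
      nlinarith [sq_nonneg s]
  · rintro ⟨hq1, hp1, h1, h2⟩ x y z hball
    have hz2 : z ^ 2 ≤ 1 := by nlinarith [sq_nonneg x, sq_nonneg y]
    have hxy : x ^ 2 + y ^ 2 ≤ 1 - z ^ 2 := by linarith
    have key : p * (1 - z ^ 2) + (s + z * q) ^ 2 ≤ 1 := by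
      rcases le_total p q with hle | hle
      · have hs := h1 hle
        have hS : |s| ≤ 1 - q := by nlinarith [sq_abs s, abs_nonneg s]
        have hT : |z| ≤ 1 := by nlinarith [sq_abs z, abs_nonneg z]
        have hsz : s * z ≤ |s| * |z| := by rw [← abs_mul]; exact le_abs_self _
        nlinarith [sq_abs s, sq_abs z, abs_nonneg s, abs_nonneg z,
          mul_le_mul_of_nonneg_right hsz hq0.le,
          mul_nonneg (mul_nonneg (sub_nonneg.2 hT) (sub_nonneg.2 hle))
            (by linarith [abs_nonneg z] : (0:ℝ) ≤ 1 + |z|),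
          mul_nonneg (mul_nonneg (sub_nonneg.2 hT) (sub_nonneg.2 hT))
            (mul_nonneg hq0.le (sub_nonneg.2 hq1)),
          mul_nonneg (by linarith [abs_nonneg s] : (0:ℝ) ≤ 1 - q - |s|)
            (by nlinarith [abs_nonneg s, mul_nonneg (abs_nonneg z) hq0.le] :
              (0:ℝ) ≤ 1 - q + |s| + 2 * |z| * q)]
      · have hs := h2 hle
        by_cases hdq : q ^ 2 < p
        · have hkey : s ^ 2 * p ≤ (1 - p) * (p - q ^ 2) := by
            have h7 : (1 - p) * (p - q ^ 2) = (1 - p) * (1 - r) * p := by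
              rw [← hpr]; ring
            rw [h7]
            nlinarith [mul_le_mul_of_nonneg_right hs hp0.le]
          nlinarith [sq_nonneg ((p - q ^ 2) * z - s * q), hkey,
            sub_pos.2 hdq, hz2]
        · push_neg at hdq
          have hq2 : q = 1 := le_antisymm hq1 (by nlinarith)
          have hpp : p = 1 := le_antisymm hp1 (by nlinarith)
          subst hq2; subst hpp
          have hr1 : r = 1 := by linarith [hpr]
          rw [hr1] at hs
          have hs0 : s = 0 := by
            have h0 : s ^ 2 = 0 := le_antisymm (by nlinarith) (sq_nonneg s)
            exact pow_eq_zero_iff (two_ne_zero) |>.mp h0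
          subst hs0
          nlinarith [hz2]
    nlinarith [mul_le_mul_of_nonneg_left hxy hp0.le]

/-- Necessary and sufficient conditions for positivity of the dynamical map of a
two-level open quantum system, in Bloch coordinates. -/
theorem positivity_iff (a b s : ℝ) :
    (∀ x₀ y₀ z₀ : ℝ, x₀ ^ 2 + y₀ ^ 2 + z₀ ^ 2 ≤ 1 →
      Real.exp (-(2 * b)) * (x₀ ^ 2 + y₀ ^ 2) + (s + z₀ * Real.exp (-a)) ^ 2 ≤ 1) ↔
    (0 ≤ a ∧ 0 ≤ b ∧
      (a ≤ 2 * b → s ^ 2 ≤ (1 - Real.exp (-a)) ^ 2) ∧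
      (2 * b ≤ a →
        s ^ 2 ≤ (1 - Real.exp (-(2 * b))) * (1 - Real.exp (-(2 * (a - b)))))) := by
  rw [pos_aux (Real.exp (-(2*b))) (Real.exp (-a)) (Real.exp (-(2*(a-b)))) s
    (Real.exp_pos _) (Real.exp_pos _)
    (by rw [← Real.exp_add, pow_two, ← Real.exp_add]; congr 1; ring)]
  rw [Real.exp_le_one_iff, Real.exp_le_one_iff, Real.exp_le_exp, Real.exp_le_exp]
  constructor
  · rintro ⟨h1, h2, h3, h4⟩
    exact ⟨by linarith, by linarith, fun h => h3 (by linarith), fun h => h4 (by linarith)⟩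
  · rintro ⟨h1, h2, h3, h4⟩
    exact ⟨by linarith, by linarith, fun h => h3 (by linarith), fun h => h4 (by linarith)⟩
end

section
/- Let a, b, s be real numbers with 0 ≤ a ≤ 2b. Then the following three statements are equivalent: (i) |s| ≤ 1 − e^{−a} and s² ≤ (1 + e^{−a})² − 4e^{−2b}; (ii) s² ≤ (1 − e^{−a})²; (iii) for all real x₀, y₀, z₀ with x₀² + y₀² + z₀² ≤ 1, one has e^{−2b}(x₀² + y₀²) + (s + z₀e^{−a})² ≤ 1. (When 0 ≤ γ̃₊ ≤ 2Γ̃, complete positivity is equivalent to positivity.) -/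
/-- When `0 ≤ γ̃₊ ≤ 2Γ̃`, complete positivity is equivalent to positivity for the
two-level dynamical map. -/
theorem cp_iff_positive_of_le (a b s : ℝ) (ha : 0 ≤ a) (hab : a ≤ 2 * b) :
    ((|s| ≤ 1 - Real.exp (-a) ∧
        s ^ 2 ≤ (1 + Real.exp (-a)) ^ 2 - 4 * Real.exp (-(2 * b))) ↔
      s ^ 2 ≤ (1 - Real.exp (-a)) ^ 2) ∧
    ((s ^ 2 ≤ (1 - Real.exp (-a)) ^ 2) ↔
      (∀ x₀ y₀ z₀ : ℝ, x₀ ^ 2 + y₀ ^ 2 + z₀ ^ 2 ≤ 1 →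
        Real.exp (-(2 * b)) * (x₀ ^ 2 + y₀ ^ 2) + (s + z₀ * Real.exp (-a)) ^ 2 ≤ 1)) := by
  set E := Real.exp (-a) with hEdef
  set F := Real.exp (-(2 * b)) with hFdef
  have hE0 : 0 < E := Real.exp_pos _
  have hF0 : 0 < F := Real.exp_pos _
  have hE1 : E ≤ 1 := Real.exp_le_one_iff.mpr (by linarith)
  have hFE : F ≤ E := Real.exp_le_exp.mpr (by linarith)
  constructor
  · constructor
    · rintro ⟨h1, _⟩
      nlinarith [sq_abs s, abs_nonneg s]
    · intro h
      have habs : |s| ≤ 1 - E := by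
        nlinarith [sq_abs s, abs_nonneg s, sq_nonneg (|s| - (1 - E))]
      exact ⟨habs, by nlinarith⟩
  · constructor
    · intro h x y z hxyz
      rcases eq_or_lt_of_le hE1 with hE1' | hE1'
      · have hs : s = 0 := by nlinarith [sq_nonneg s]
        rw [hs, ← hE1']
        nlinarith [mul_nonneg (show (0:ℝ) ≤ 1 - F by linarith)
          (add_nonneg (sq_nonneg x) (sq_nonneg y))]
      · have t1 : 0 ≤ (1 - E) * (E - F) * (x ^ 2 + y ^ 2) :=
          mul_nonneg (mul_nonneg (by linarith) (by linarith))
            (add_nonneg (sq_nonneg x) (sq_nonneg y))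
        have t2 : 0 ≤ (1 - E) * E * (1 - z ^ 2 - (x ^ 2 + y ^ 2)) :=
          mul_nonneg (mul_nonneg (by linarith) hE0.le) (by nlinarith)
        have t3 : 0 ≤ E * ((1 - E) * z - s) ^ 2 :=
          mul_nonneg hE0.le (sq_nonneg _)
        have t4 : 0 ≤ (1 - E) ^ 2 - s ^ 2 := by linarith
        have key : 0 ≤ (1 - E) * (1 - (F * (x ^ 2 + y ^ 2) + (s + z * E) ^ 2)) := by
          nlinarith [t1, t2, t3, t4]
        by_contra hc
        push_neg at hc
        have : 0 < (1 - E) * ((F * (x ^ 2 + y ^ 2) + (s + z * E) ^ 2) - 1) :=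
          mul_pos (by linarith) (by linarith)
        nlinarith [key, this]
    · intro h
      have h1 := h 0 0 1 (by norm_num)
      have h2 := h 0 0 (-1) (by norm_num)
      norm_num at h1 h2
      have hb1 := abs_le.mp h1
      have hb2 := abs_le.mp h2
      have h3 : (|s| + E) ^ 2 ≤ 1 := by
        rcases abs_cases s with ⟨hs, _⟩ | ⟨hs, _⟩ <;> rw [hs] <;>
          nlinarith [hb1.1, hb1.2, hb2.1, hb2.2]
      have h4 : |s| + E ≤ 1 := by nlinarith [abs_nonneg s]
      nlinarith [sq_abs s, abs_nonneg s]
end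

section
/- Let γ₊, γ₋, Γ : [0,∞) → ℝ be continuous functions such that for all t ≥ 0: γ₊(t) ≥ 0, −γ₊(t) ≤ γ₋(t) ≤ γ₊(t), and Γ̃(t) ≥ γ̃₊(t)/2 ≥ 0, where γ̃₊(t) = ∫₀ᵗ γ₊(τ)dτ and Γ̃(t) = ∫₀ᵗ Γ(τ)dτ. Define s(t) = e^{−γ̃₊(t)} ∫₀ᵗ e^{γ̃₊(τ)}γ₋(τ)dτ. Then for all t ≥ 0: |s(t)| ≤ 1 − e^{−γ̃₊(t)} and s(t)² ≤ (1 + e^{−γ̃₊(t)})² − 4e^{−2Γ̃(t)}. (The dynamical map of a quasi-Markovian system is completely positive.) -/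
open intervalIntegral

/-- The dynamical map of a quasi-Markovian two-level system is completely positive:
the quasi-Markovian conditions on the rates imply the two CP conditions
`|s| ≤ 1 - e^{-γ̃₊}` and `s² ≤ (1 + e^{-γ̃₊})² - 4 e^{-2Γ̃}`. -/
theorem quasiMarkovian_implies_cp (γp γm Γ : ℝ → ℝ)
    (hγp : ContinuousOn γp (Set.Ici 0))
    (hγm : ContinuousOn γm (Set.Ici 0))
    (hΓ : ContinuousOn Γ (Set.Ici 0))
    (hpos : ∀ t ≥ (0 : ℝ), 0 ≤ γp t)
    (hbound : ∀ t ≥ (0 : ℝ), -γp t ≤ γm t ∧ γm t ≤ γp t)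
    (hQM : ∀ t ≥ (0 : ℝ),
      (∫ τ in (0 : ℝ)..t, γp τ) / 2 ≤ ∫ τ in (0 : ℝ)..t, Γ τ ∧
      0 ≤ (∫ τ in (0 : ℝ)..t, γp τ) / 2) :
    ∀ t ≥ (0 : ℝ),
      |Real.exp (-(∫ τ in (0 : ℝ)..t, γp τ)) *
          ∫ τ in (0 : ℝ)..t, Real.exp (∫ u in (0 : ℝ)..τ, γp u) * γm τ|
        ≤ 1 - Real.exp (-(∫ τ in (0 : ℝ)..t, γp τ)) ∧
      (Real.exp (-(∫ τ in (0 : ℝ)..t, γp τ)) *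
          ∫ τ in (0 : ℝ)..t, Real.exp (∫ u in (0 : ℝ)..τ, γp u) * γm τ) ^ 2
        ≤ (1 + Real.exp (-(∫ τ in (0 : ℝ)..t, γp τ))) ^ 2 -
            4 * Real.exp (-(2 * ∫ τ in (0 : ℝ)..t, Γ τ)) := by
  intro t ht
  -- continuous extensions of γp, γm to all of ℝ
  set f : ℝ → ℝ := fun x => γp (max x 0) with hf_def
  set fm : ℝ → ℝ := fun x => γm (max x 0) with hfm_def
  have hfc : Continuous f :=
    hγp.comp_continuous (continuous_id.max continuous_const) fun x => le_max_right x 0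
  have hfmc : Continuous fm :=
    hγm.comp_continuous (continuous_id.max continuous_const) fun x => le_max_right x 0
  set G : ℝ → ℝ := fun x => ∫ u in (0:ℝ)..x, f u with hG_def
  have hGint : ∀ x ≥ (0:ℝ), (∫ u in (0:ℝ)..x, γp u) = G x := by
    intro x hx
    apply intervalIntegral.integral_congr
    intro u hu
    rw [Set.uIcc_of_le hx] at hu
    simp [hf_def, max_eq_left hu.1]
  have hGd : ∀ x, HasDerivAt G (f x) x := fun x =>
    (hfc.integral_hasStrictDerivAt 0 x).hasDerivAt
  have hGc : Continuous G := by
    rw [continuous_iff_continuousAt]; exact fun x => (hGd x).continuousAt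
  have hG0 : G 0 = 0 := intervalIntegral.integral_same
  have hcont : Continuous fun x => Real.exp (G x) * f x :=
    (hGc.rexp).mul hfc
  -- FTC: ∫ e^G f = e^{G t} - 1
  have key : (∫ τ in (0:ℝ)..t, Real.exp (G τ) * f τ) = Real.exp (G t) - 1 := by
    have := intervalIntegral.integral_eq_sub_of_hasDerivAt
      (f := fun x => Real.exp (G x)) (a := 0) (b := t)
      (fun x _ => (hGd x).exp) (hcont.intervalIntegrable _ _)
    rw [this]; rw [hG0, Real.exp_zero]
  -- rewrite the γm integral
  have hIeq : (∫ τ in (0:ℝ)..t, Real.exp (∫ u in (0:ℝ)..τ, γp u) * γm τ)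
      = ∫ τ in (0:ℝ)..t, Real.exp (G τ) * fm τ := by
    apply intervalIntegral.integral_congr
    intro τ hτ
    rw [Set.uIcc_of_le ht] at hτ
    dsimp only
    rw [hGint τ hτ.1]
    simp [hfm_def, max_eq_left hτ.1]
  -- pointwise bound |e^G fm| ≤ e^G f
  have hpt : ∀ τ, |Real.exp (G τ) * fm τ| ≤ Real.exp (G τ) * f τ := by
    intro τ
    rw [abs_mul, abs_of_pos (Real.exp_pos _)]
    apply mul_le_mul_of_nonneg_left _ (Real.exp_pos _).le
    have h := hbound (max τ 0) (le_max_right τ 0)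
    exact abs_le.mpr ⟨h.1, h.2⟩
  have hIbound : |∫ τ in (0:ℝ)..t, Real.exp (G τ) * fm τ| ≤ Real.exp (G t) - 1 := by
    rw [← key]
    calc |∫ τ in (0:ℝ)..t, Real.exp (G τ) * fm τ|
        ≤ ∫ τ in (0:ℝ)..t, |Real.exp (G τ) * fm τ| := by
          have h := intervalIntegral.norm_integral_le_integral_norm
            (f := fun τ => Real.exp (G τ) * fm τ) (μ := MeasureTheory.volume) ht
          simpa only [Real.norm_eq_abs] using h
      _ ≤ ∫ τ in (0:ℝ)..t, Real.exp (G τ) * f τ := by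
          apply intervalIntegral.integral_mono_on ht
            ((hGc.rexp.mul hfmc).abs.intervalIntegrable _ _)
            (hcont.intervalIntegrable _ _)
          intro τ _; exact hpt τ
  -- abbreviations
  set a : ℝ := Real.exp (-(∫ τ in (0:ℝ)..t, γp τ)) with ha_def
  have haG : a = Real.exp (-(G t)) := by rw [ha_def, hGint t ht]
  have haGpos : (0:ℝ) < a := Real.exp_pos _
  have haGe : a * Real.exp (G t) = 1 := by
    rw [haG, ← Real.exp_add]; simp
  have h1 : |a * ∫ τ in (0:ℝ)..t, Real.exp (∫ u in (0:ℝ)..τ, γp u) * γm τ| ≤ 1 - a := by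
    rw [hIeq, abs_mul, abs_of_pos haGpos]
    calc a * |∫ τ in (0:ℝ)..t, Real.exp (G τ) * fm τ|
        ≤ a * (Real.exp (G t) - 1) := mul_le_mul_of_nonneg_left hIbound haGpos.le
      _ = 1 - a := by rw [mul_sub, haGe, mul_one]
  refine ⟨h1, ?_⟩
  -- second CP condition
  have hexp : Real.exp (-(2 * ∫ τ in (0:ℝ)..t, Γ τ)) ≤ a := by
    rw [ha_def]
    apply Real.exp_le_exp.mpr
    have := (hQM t ht).1
    linarith
  have hs2 : (a * ∫ τ in (0:ℝ)..t, Real.exp (∫ u in (0:ℝ)..τ, γp u) * γm τ) ^ 2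
      ≤ (1 - a) ^ 2 := by
    rw [← sq_abs]
    have h1a : (0:ℝ) ≤ 1 - a := le_trans (abs_nonneg _) h1
    exact pow_le_pow_left₀ (abs_nonneg _) h1 2
  nlinarith [hs2, hexp]
end

section
/- Let A, B : [0,∞) → ℝ be continuous functions converging respectively to limits A₀ and B₀ as t → +∞, with A₀ ≠ 0. Let z : [0,∞) → ℝ be a bounded differentiable function satisfying ż(t) = A(t)z(t) + B(t) for all t ≥ 0. Then z(t) converges to −B₀/A₀ as t → +∞. -/
open Filter Topology

/-! Set `w = z + B₀/A₀`, so that `ẇ = A w + C` with `C = B - A B₀/A₀ → 0`; it suffices that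
`w → 0`, and by symmetry (`-w` solves the same kind of equation) that `w ≤ ε` eventually.
Once `A` is close to `A₀` and `C` is small, on the region `{w ≥ ε}` the derivative `ẇ` has the
sign of `A₀` and is bounded away from `0`. If `A₀ > 0`, a solution entering that region escapes
linearly to `+∞`, contradicting boundedness. If `A₀ < 0`, the solution cannot stay in the region
forever, and the level `ε` is a barrier that it cannot cross upwards afterwards. -/

lemma image_le_of_deriv_lt_deriv_boundary_Ici {f f' g g' : ℝ → ℝ} {a : ℝ}
    (hf : ∀ t ≥ a, HasDerivAt f (f' t) t) (hg : ∀ t ≥ a, HasDerivAt g (g' t) t)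
    (ha : f a ≤ g a) (hbound : ∀ t ≥ a, f t = g t → f' t < g' t) :
    ∀ t ≥ a, f t ≤ g t := fun t ht =>
  image_le_of_deriv_right_lt_deriv_boundary' (b := t)
    (fun s hs => (hf s hs.1).continuousAt.continuousWithinAt)
    (fun s hs => (hf s hs.1).hasDerivWithinAt) ha
    (fun s hs => (hg s hs.1).continuousAt.continuousWithinAt)
    (fun s hs => (hg s hs.1).hasDerivWithinAt) (fun s hs => hbound s hs.1) ⟨ht, le_rfl⟩

lemma tendsto_atTop_of_hasDerivAt_gt {g g' : ℝ → ℝ} {a β c : ℝ} (hc : 0 < c)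
    (hg : ∀ t ≥ a, HasDerivAt g (g' t) t) (hderiv : ∀ t ≥ a, β ≤ g t → c < g' t)
    (ha : β ≤ g a) : Tendsto g atTop atTop := by
  have hline : ∀ t, HasDerivAt (fun s => β + c * (s - a)) c t := fun t => by
    simpa using ((hasDerivAt_id t).sub_const a).const_mul c |>.const_add β
  have hle := image_le_of_deriv_lt_deriv_boundary_Ici (fun t _ => hline t) hg (by simpa using ha)
    fun t ht heq => hderiv t ht (by nlinarith [mul_nonneg hc.le (sub_nonneg.2 ht)])
  refine tendsto_atTop_mono' atTop (eventually_atTop.2 ⟨a, hle⟩) ?_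
  exact tendsto_atTop_add_const_left _ β <|
    (tendsto_atTop_add_const_right _ (-a) tendsto_id).const_mul_atTop hc

lemma eventually_le_of_hasDerivAt_lt {g g' : ℝ → ℝ} {a β c : ℝ} (hc : 0 < c)
    (hg : ∀ t ≥ a, HasDerivAt g (g' t) t) (hderiv : ∀ t ≥ a, β ≤ g t → g' t < -c) :
    ∀ᶠ t in atTop, g t ≤ β := by
  by_cases hreach : ∃ b ≥ a, g b ≤ β
  · obtain ⟨b, hba, hgb⟩ := hreach
    refine eventually_atTop.2 ⟨b, image_le_of_deriv_lt_deriv_boundary_Ici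
      (fun t ht => hg t (hba.trans ht)) (fun t _ => hasDerivAt_const t β) hgb fun t ht heq => ?_⟩
    linarith [hderiv t (hba.trans ht) heq.ge]
  · push Not at hreach
    have hescape : Tendsto (-g) atTop atTop :=
      tendsto_atTop_of_hasDerivAt_gt hc (fun t ht => (hg t ht).neg)
        (fun t ht _ => by linarith [hderiv t ht (hreach t ht).le]) (le_refl (-g a))
    obtain ⟨t, hta, hgt⟩ :=
      ((eventually_ge_atTop a).and (hescape.eventually_ge_atTop (-β))).exists
    linarith [hreach t hta, show -g t ≥ -β from hgt]

section LinearEquation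

variable {u a c : ℝ → ℝ} {a₀ : ℝ}

/-- Multiplying by `a₀` handles both signs of `a₀` at once. -/
lemma eventually_hasDerivAt_and_mul_deriv_gt (ha₀ : a₀ ≠ 0) (ha : Tendsto a atTop (𝓝 a₀))
    (hc : Tendsto c atTop (𝓝 0)) (hu : ∀ᶠ t in atTop, HasDerivAt u (a t * u t + c t) t)
    {ε : ℝ} (hε : 0 < ε) :
    ∀ᶠ t in atTop, HasDerivAt u (a t * u t + c t) t ∧
      (ε ≤ u t → a₀ ^ 2 * ε / 4 < a₀ * (a t * u t + c t)) := by
  have hsq : 0 < a₀ ^ 2 := by positivity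
  have hnear : ∀ᶠ t in atTop, a₀ ^ 2 / 2 < a₀ * a t :=
    (ha.const_mul a₀).eventually (lt_mem_nhds (by nlinarith))
  have hsmall : ∀ᶠ t in atTop, -(a₀ ^ 2 * ε / 4) < a₀ * c t :=
    (hc.const_mul a₀).eventually (lt_mem_nhds (by simp only [mul_zero]; nlinarith))
  filter_upwards [hu, hnear, hsmall] with t hut hat hct
  refine ⟨hut, fun hεu => ?_⟩
  nlinarith [mul_le_mul_of_nonneg_left hεu (by linarith : (0 : ℝ) ≤ a₀ * a t - a₀ ^ 2 / 2)]

lemma eventually_le_of_hasDerivAt_linear (ha₀ : a₀ ≠ 0) (ha : Tendsto a atTop (𝓝 a₀))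
    (hc : Tendsto c atTop (𝓝 0)) (hu : ∀ᶠ t in atTop, HasDerivAt u (a t * u t + c t) t)
    (hbdd : IsBoundedUnder (· ≤ ·) atTop u) {ε : ℝ} (hε : 0 < ε) :
    ∀ᶠ t in atTop, u t ≤ ε := by
  obtain ⟨T, hT⟩ := eventually_atTop.1 (eventually_hasDerivAt_and_mul_deriv_gt ha₀ ha hc hu hε)
  have hκ : 0 < |a₀| * ε / 4 := by positivity
  rcases ha₀.lt_or_gt with hneg | hpos
  · refine eventually_le_of_hasDerivAt_lt hκ (fun t ht => (hT t ht).1) fun t ht hεu => ?_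
    have := (hT t ht).2 hεu
    rw [abs_of_neg hneg]
    nlinarith
  · refine eventually_atTop.2 ⟨T, fun b hb => le_of_not_gt fun hεb => ?_⟩
    refine not_isBoundedUnder_of_tendsto_atTop (tendsto_atTop_of_hasDerivAt_gt hκ
      (fun t ht => (hT t (hb.trans ht)).1) (fun t ht hεu => ?_) hεb.le) hbdd
    have := (hT t (hb.trans ht)).2 hεu
    rw [abs_of_pos hpos]
    nlinarith

lemma tendsto_zero_of_hasDerivAt_linear (ha₀ : a₀ ≠ 0) (ha : Tendsto a atTop (𝓝 a₀))
    (hc : Tendsto c atTop (𝓝 0)) (hu : ∀ᶠ t in atTop, HasDerivAt u (a t * u t + c t) t)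
    (hbdd : IsBoundedUnder (· ≤ ·) atTop fun t => |u t|) :
    Tendsto u atTop (𝓝 0) := by
  have hupper {ε : ℝ} (hε : 0 < ε) := eventually_le_of_hasDerivAt_linear ha₀ ha hc hu
    (hbdd.mono_le (Eventually.of_forall fun t => le_abs_self (u t))) hε
  have hlower {ε : ℝ} (hε : 0 < ε) := eventually_le_of_hasDerivAt_linear ha₀ ha
    (by simpa using hc.neg)
    (hu.mono fun t h => h.neg.congr_deriv (by simp only [Pi.neg_apply]; ring))
    (hbdd.mono_le (Eventually.of_forall fun t => neg_le_abs (u t))) hε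
  refine tendsto_order.2 ⟨fun ε hε => ?_, fun ε hε => ?_⟩
  · filter_upwards [hlower (half_pos (neg_pos.2 hε))] with t ht
    simp only [Pi.neg_apply] at ht
    linarith
  · filter_upwards [hupper (half_pos hε)] with t ht
    linarith

end LinearEquation

theorem bounded_solution_tendsto_general (A B : ℝ → ℝ) (A₀ B₀ : ℝ)
    (hA₀ : Tendsto A atTop (nhds A₀)) (hB₀ : Tendsto B atTop (nhds B₀))
    (hA₀ne : A₀ ≠ 0)
    (z : ℝ → ℝ) (hbdd : ∃ M : ℝ, ∀ t ≥ (0 : ℝ), |z t| ≤ M)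
    (hode : ∀ t ≥ (0 : ℝ), HasDerivAt z (A t * z t + B t) t) :
    Tendsto z atTop (nhds (-B₀ / A₀)) := by
  obtain ⟨M, hM⟩ := hbdd
  set w : ℝ → ℝ := fun t => z t + B₀ / A₀
  have hC : Tendsto (fun t => B t - A t * (B₀ / A₀)) atTop (𝓝 0) := by
    simpa [mul_div_cancel₀ _ hA₀ne] using hB₀.sub (hA₀.mul_const (B₀ / A₀))
  have hw : ∀ᶠ t in atTop, HasDerivAt w (A t * w t + (B t - A t * (B₀ / A₀))) t :=
    (eventually_ge_atTop 0).mono fun t ht => (hode t ht).add_const _ |>.congr_deriv (by ring)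
  have hwbdd : IsBoundedUnder (· ≤ ·) atTop fun t => |w t| :=
    isBoundedUnder_of_eventually_le <| (eventually_ge_atTop 0).mono fun t ht =>
      (abs_add_le _ _).trans (add_le_add_left (hM t ht) _)
  have hw₀ := tendsto_zero_of_hasDerivAt_linear hA₀ne hA₀ hC hw hwbdd
  simpa [w, neg_div] using hw₀.sub_const (B₀ / A₀)

/-- Any bounded solution of `ż = A z + B`, with `A → A₀ ≠ 0` and `B → B₀`,
converges to `-B₀/A₀`. -/
theorem bounded_solution_tendsto (A B : ℝ → ℝ) (A₀ B₀ : ℝ)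
    (hA : ContinuousOn A (Set.Ici 0)) (hB : ContinuousOn B (Set.Ici 0))
    (hA₀ : Tendsto A atTop (nhds A₀)) (hB₀ : Tendsto B atTop (nhds B₀))
    (hA₀ne : A₀ ≠ 0)
    (z : ℝ → ℝ) (hbdd : ∃ M : ℝ, ∀ t ≥ (0 : ℝ), |z t| ≤ M)
    (hode : ∀ t ≥ (0 : ℝ), HasDerivAt z (A t * z t + B t) t) :
    Tendsto z atTop (nhds (-B₀ / A₀)) :=
  bounded_solution_tendsto_general A B A₀ B₀ hA₀ hB₀ hA₀ne z hbdd hode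
end

section
/- Let A, B : [0,∞) → ℝ be continuous functions for which there exists α > 0 such that t^{1+α}A(t) → 0 and t^{1+α}B(t) → 0 as t → +∞ (i.e., A and B go to 0 not too slowly). Let z : [0,∞) → ℝ be a bounded differentiable function satisfying ż(t) = A(t)z(t) + B(t) for all t ≥ 0. Then z(t) converges to a finite limit as t → +∞. -/
open Filter MeasureTheory

/-- If `A` and `B` go to `0` not too slowly (there is `α > 0` with
`t^{1+α} A(t) → 0` and `t^{1+α} B(t) → 0`), then any bounded solution of
`ż = A z + B` converges to a finite limit. -/
theorem bounded_solution_converges (A B : ℝ → ℝ)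
    (hA : ContinuousOn A (Set.Ici 0)) (hB : ContinuousOn B (Set.Ici 0))
    (hdecay : ∃ α > (0 : ℝ),
      Tendsto (fun t => t ^ (1 + α) * A t) atTop (nhds 0) ∧
      Tendsto (fun t => t ^ (1 + α) * B t) atTop (nhds 0))
    (z : ℝ → ℝ) (hbdd : ∃ M : ℝ, ∀ t ≥ (0 : ℝ), |z t| ≤ M)
    (hode : ∀ t ≥ (0 : ℝ), HasDerivAt z (A t * z t + B t) t) :
    ∃ L : ℝ, Tendsto z atTop (nhds L) := by
  obtain ⟨α, hα, hAd, hBd⟩ := hdecay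
  obtain ⟨M, hM⟩ := hbdd
  have hM0 : 0 ≤ M := le_trans (abs_nonneg _) (hM 0 le_rfl)
  set g : ℝ → ℝ := fun t => A t * z t + B t with hg
  -- choose T ≥ 1 with bounds
  have hAe : ∀ᶠ t in atTop, |t ^ (1 + α) * A t| ≤ 1 := by
    have h := (abs_zero (α := ℝ) ▸ hAd.abs).eventually_le_const (by norm_num : (0:ℝ) < 1)
    simpa using h
  have hBe : ∀ᶠ t in atTop, |t ^ (1 + α) * B t| ≤ 1 := by
    have h := (abs_zero (α := ℝ) ▸ hBd.abs).eventually_le_const (by norm_num : (0:ℝ) < 1)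
    simpa using h
  obtain ⟨T, hT⟩ := ((hAe.and hBe).and (eventually_ge_atTop (1:ℝ))).exists_forall_of_atTop
  have hT1 : (1:ℝ) ≤ T := (hT T le_rfl).2
  have hT0 : (0:ℝ) < T := lt_of_lt_of_le one_pos hT1
  -- pointwise bound for g on [T, ∞)
  have hbound : ∀ t ≥ T, |g t| ≤ (M + 1) * t ^ (-(1 + α)) := by
    intro t ht
    have ht1 : (1:ℝ) ≤ t := hT1.trans ht
    have ht0 : (0:ℝ) < t := lt_of_lt_of_le one_pos ht1
    have htp : 0 < t ^ (1 + α) := Real.rpow_pos_of_pos ht0 _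
    have hAt : |A t| ≤ t ^ (-(1 + α)) := by
      have h1 : |t ^ (1 + α) * A t| ≤ 1 := (hT t ht).1.1
      rw [abs_mul, abs_of_pos htp] at h1
      rw [Real.rpow_neg ht0.le]
      calc |A t| = (t ^ (1 + α) * |A t|) / t ^ (1 + α) := by field_simp
        _ ≤ 1 / t ^ (1 + α) := by gcongr
        _ = (t ^ (1 + α))⁻¹ := one_div _
    have hBt : |B t| ≤ t ^ (-(1 + α)) := by
      have h1 : |t ^ (1 + α) * B t| ≤ 1 := (hT t ht).1.2
      rw [abs_mul, abs_of_pos htp] at h1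
      rw [Real.rpow_neg ht0.le]
      calc |B t| = (t ^ (1 + α) * |B t|) / t ^ (1 + α) := by field_simp
        _ ≤ 1 / t ^ (1 + α) := by gcongr
        _ = (t ^ (1 + α))⁻¹ := one_div _
    have hz : |z t| ≤ M := hM t ht0.le
    calc |g t| ≤ |A t * z t| + |B t| := abs_add_le _ _
      _ = |A t| * |z t| + |B t| := by rw [abs_mul]
      _ ≤ t ^ (-(1 + α)) * M + t ^ (-(1 + α)) :=
          add_le_add (mul_le_mul hAt hz (abs_nonneg _) (Real.rpow_pos_of_pos ht0 _).le) hBt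
      _ = (M + 1) * t ^ (-(1 + α)) := by ring
  -- continuity of z and g on Ici 0
  have hzc : ContinuousOn z (Set.Ici 0) := fun t ht =>
    ((hode t ht).continuousAt).continuousWithinAt
  have hgc : ContinuousOn g (Set.Ici 0) := (hA.mul hzc).add hB
  -- integrability of g on Ioi T
  have hmaj : IntegrableOn (fun t => (M + 1) * t ^ (-(1 + α))) (Set.Ioi T) := by
    exact (integrableOn_Ioi_rpow_of_lt (by linarith) hT0).const_mul _
  have hgint : IntegrableOn g (Set.Ioi T) := by
    refine hmaj.mono' ?_ ?_
    · exact (hgc.mono (fun x hx => le_of_lt (hT0.trans hx) : Set.Ioi T ⊆ Set.Ici 0)).aestronglyMeasurable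
        measurableSet_Ioi
    · filter_upwards [ae_restrict_mem measurableSet_Ioi] with x hx
      simpa [Real.norm_eq_abs] using hbound x (le_of_lt hx)
  -- z t = z T + ∫ g on [T, t]
  have hzeq : ∀ t ≥ T, z t = z T + ∫ s in T..t, g s := by
    intro t ht
    have : ∫ s in T..t, g s = z t - z T := by
      apply intervalIntegral.integral_eq_sub_of_hasDerivAt
      · intro x hx
        rw [Set.uIcc_of_le ht] at hx
        exact hode x (le_trans hT0.le hx.1)
      · apply ContinuousOn.intervalIntegrable
        apply hgc.mono
        rw [Set.uIcc_of_le ht]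
        exact fun x hx => le_trans hT0.le hx.1
    rw [this]; ring
  have hti : Tendsto (fun t => ∫ s in T..t, g s) atTop (nhds (∫ s in Set.Ioi T, g s)) :=
    intervalIntegral_tendsto_integral_Ioi T hgint tendsto_id
  refine ⟨z T + ∫ s in Set.Ioi T, g s, ?_⟩
  have := (tendsto_const_nhds.add hti :
    Tendsto (fun t => z T + ∫ s in T..t, g s) atTop (nhds (z T + ∫ s in Set.Ioi T, g s)))
  apply this.congr'
  filter_upwards [eventually_ge_atTop T] with t ht
  exact (hzeq t ht).symm
end

section
/- Let γ₊, γ₋ : [0,∞) → ℝ be continuous functions such that for all t ≥ 0: γ₊(t) ≥ 0 and −γ₊(t) ≤ γ₋(t) ≤ γ₊(t). Let z : [0,∞) → ℝ be differentiable with ż(t) = −γ₊(t)z(t) + γ₋(t) for all t ≥ 0 and −1 ≤ z(0) ≤ 1. Then for all t ≥ 0: −(1 − (1 + z(0))e^{−γ̃₊(t)}) ≤ z(t) ≤ 1 − (1 − z(0))e^{−γ̃₊(t)}, where γ̃₊(t) = ∫₀ᵗ γ₊(τ)dτ. In particular, the particular solution s(t) (the solution with s(0) = 0) satisfies −(1 −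 e^{−γ̃₊(t)}) ≤ s(t) ≤ 1 − e^{−γ̃₊(t)} for all t ≥ 0. -/
/-!
Multiplying by the integrating factor `exp γ̃₊` turns the equation into
`d/dt ((z - 1) exp γ̃₊) = (γ₋ - γ₊) exp γ̃₊ ≤ 0`, so `(z - 1) exp γ̃₊` can only decrease from its
initial value `z(0) - 1`; this is the upper bound. The lower bound is the upper bound for `-z`,
which solves the same equation with `γ₋` replaced by `-γ₋`.
-/

open Set Real

section IntegratingFactor

variable {g h z : ℝ → ℝ} {a c : ℝ}

theorem hasDerivAt_integral_of_continuousOn_Ici (hg : ContinuousOn g (Ici a)) {x : ℝ}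
    (hx : a < x) : HasDerivAt (fun t => ∫ τ in a..t, g τ) (g x) x :=
  intervalIntegral.integral_hasDerivAt_right
    ((hg.mono (uIcc_of_le hx.le ▸ Icc_subset_Ici_self)).intervalIntegrable)
    ((hg.mono Ioi_subset_Ici_self).stronglyMeasurableAtFilter isOpen_Ioi x hx)
    (hg.continuousAt (Ici_mem_nhds hx))

theorem continuousOn_integral_of_continuousOn_Ici (hg : ContinuousOn g (Ici a)) :
    ContinuousOn (fun t => ∫ τ in a..t, g τ) (Ici a) := by
  intro x hx
  rcases (mem_Ici.1 hx).eq_or_lt with rfl | hx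
  · have hderiv : HasDerivWithinAt (fun t => ∫ τ in a..t, g τ) (g a) (Ici a) a :=
      intervalIntegral.integral_hasDerivWithinAt_right IntervalIntegrable.refl
        ((hg.mono Ioi_subset_Ici_self).stronglyMeasurableAtFilter_nhdsWithin measurableSet_Ioi a)
        (hg a self_mem_Ici |>.mono Ioi_subset_Ici_self)
    exact hderiv.continuousWithinAt
  · exact (hasDerivAt_integral_of_continuousOn_Ici hg hx).continuousAt.continuousWithinAt

theorem antitoneOn_sub_mul_exp_integral (hg : ContinuousOn g (Ici a))
    (hz : ∀ t ≥ a, HasDerivAt z (-g t * z t + h t) t) (hh : ∀ t ≥ a, h t ≤ c * g t) :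
    AntitoneOn (fun t => (z t - c) * exp (∫ τ in a..t, g τ)) (Ici a) := by
  have hzc : ContinuousOn z (Ici a) := fun x hx => (hz x hx).continuousAt.continuousWithinAt
  refine antitoneOn_of_hasDerivWithinAt_nonpos (convex_Ici a)
    (f' := fun x => (h x - c * g x) * exp (∫ τ in a..x, g τ))
    ((hzc.sub continuousOn_const).mul (continuousOn_integral_of_continuousOn_Ici hg).rexp)
    (fun x hx => ?_) (fun x hx => ?_) <;> simp only [interior_Ici] at hx ⊢
  · refine ((((hz x hx.out.le).sub_const c).mul
      (hasDerivAt_integral_of_continuousOn_Ici hg hx).exp).congr_deriv ?_).hasDerivWithinAt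
    ring
  · exact mul_nonpos_of_nonpos_of_nonneg (sub_nonpos.2 (hh x hx.out.le)) (exp_pos _).le

theorem le_sub_mul_exp_neg_integral (hg : ContinuousOn g (Ici a))
    (hz : ∀ t ≥ a, HasDerivAt z (-g t * z t + h t) t) (hh : ∀ t ≥ a, h t ≤ c * g t)
    {t : ℝ} (ht : a ≤ t) :
    z t ≤ c - (c - z a) * exp (-(∫ τ in a..t, g τ)) := by
  have hdecr := antitoneOn_sub_mul_exp_integral hg hz hh self_mem_Ici ht ht
  simp only [intervalIntegral.integral_same, exp_zero, mul_one] at hdecr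
  rw [exp_neg, ← div_eq_mul_inv, le_sub_comm, div_le_iff₀ (exp_pos _)]
  linarith

theorem neg_sub_mul_exp_neg_integral_le (hg : ContinuousOn g (Ici a))
    (hz : ∀ t ≥ a, HasDerivAt z (-g t * z t + h t) t) (hh : ∀ t ≥ a, -(c * g t) ≤ h t)
    {t : ℝ} (ht : a ≤ t) :
    -(c - (c + z a) * exp (-(∫ τ in a..t, g τ))) ≤ z t := by
  have hz_neg : ∀ t ≥ a, HasDerivAt (-z) (-g t * (-z) t + -h t) t := fun t ht =>
    (hz t ht).neg.congr_deriv (by simp only [Pi.neg_apply]; ring)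
  have h_neg := le_sub_mul_exp_neg_integral hg hz_neg (fun t ht => neg_le.1 (hh t ht)) ht
  simp only [Pi.neg_apply, sub_neg_eq_add] at h_neg
  linarith

end IntegratingFactor

theorem population_bounds_general (γp γm : ℝ → ℝ)
    (hγp : ContinuousOn γp (Set.Ici 0))
    (hbound : ∀ t ≥ (0 : ℝ), -γp t ≤ γm t ∧ γm t ≤ γp t) :
    (∀ z : ℝ → ℝ,
      (∀ t ≥ (0 : ℝ), HasDerivAt z (-γp t * z t + γm t) t) →
      -1 ≤ z 0 → z 0 ≤ 1 →
      ∀ t ≥ (0 : ℝ),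
        -(1 - (1 + z 0) * Real.exp (-(∫ τ in (0 : ℝ)..t, γp τ))) ≤ z t ∧
        z t ≤ 1 - (1 - z 0) * Real.exp (-(∫ τ in (0 : ℝ)..t, γp τ))) ∧
    (∀ s : ℝ → ℝ,
      (∀ t ≥ (0 : ℝ), HasDerivAt s (-γp t * s t + γm t) t) →
      s 0 = 0 →
      ∀ t ≥ (0 : ℝ),
        -(1 - Real.exp (-(∫ τ in (0 : ℝ)..t, γp τ))) ≤ s t ∧
        s t ≤ 1 - Real.exp (-(∫ τ in (0 : ℝ)..t, γp τ))) := by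
  have bounds : ∀ z : ℝ → ℝ, (∀ t ≥ (0 : ℝ), HasDerivAt z (-γp t * z t + γm t) t) →
      ∀ t ≥ (0 : ℝ),
        -(1 - (1 + z 0) * exp (-(∫ τ in (0 : ℝ)..t, γp τ))) ≤ z t ∧
        z t ≤ 1 - (1 - z 0) * exp (-(∫ τ in (0 : ℝ)..t, γp τ)) := fun z hz t ht =>
    ⟨neg_sub_mul_exp_neg_integral_le hγp hz (fun t ht => by linarith [(hbound t ht).1]) ht,
      le_sub_mul_exp_neg_integral hγp hz (fun t ht => by linarith [(hbound t ht).2]) ht⟩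
  refine ⟨fun z hz _ _ => bounds z hz, fun s hs hs0 t ht => ?_⟩
  simpa [hs0] using bounds s hs t ht

/-- For the population equation `ż = -γ₊ z + γ₋` with `γ₊ ≥ 0` and
`-γ₊ ≤ γ₋ ≤ γ₊`, any solution starting in `[-1, 1]` satisfies
`-(1 - (1 + z(0)) e^{-γ̃₊(t)}) ≤ z(t) ≤ 1 - (1 - z(0)) e^{-γ̃₊(t)}`; in particular
the particular solution `s` (with `s(0) = 0`) satisfies
`-(1 - e^{-γ̃₊(t)}) ≤ s(t) ≤ 1 - e^{-γ̃₊(t)}`. -/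
theorem population_bounds (γp γm : ℝ → ℝ)
    (hγp : ContinuousOn γp (Set.Ici 0))
    (hγm : ContinuousOn γm (Set.Ici 0))
    (hpos : ∀ t ≥ (0 : ℝ), 0 ≤ γp t)
    (hbound : ∀ t ≥ (0 : ℝ), -γp t ≤ γm t ∧ γm t ≤ γp t) :
    (∀ z : ℝ → ℝ,
      (∀ t ≥ (0 : ℝ), HasDerivAt z (-γp t * z t + γm t) t) →
      -1 ≤ z 0 → z 0 ≤ 1 →
      ∀ t ≥ (0 : ℝ),
        -(1 - (1 + z 0) * Real.exp (-(∫ τ in (0 : ℝ)..t, γp τ))) ≤ z t ∧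
        z t ≤ 1 - (1 - z 0) * Real.exp (-(∫ τ in (0 : ℝ)..t, γp τ))) ∧
    (∀ s : ℝ → ℝ,
      (∀ t ≥ (0 : ℝ), HasDerivAt s (-γp t * s t + γm t) t) →
      s 0 = 0 →
      ∀ t ≥ (0 : ℝ),
        -(1 - Real.exp (-(∫ τ in (0 : ℝ)..t, γp τ))) ≤ s t ∧
        s t ≤ 1 - Real.exp (-(∫ τ in (0 : ℝ)..t, γp τ))) :=
  population_bounds_general γp γm hγp hbound
end

section
/- Let Γ, ω, γ₊, γ₋ : [0,∞) → ℝ be continuous functions such that, as t → +∞, Γ(t) → Γ⁰ with Γ⁰ > 0, γ₊(t) → γ₊⁰ with γ₊⁰ > 0, and γ₋(t) → γ₋⁰. Let x, y, z : [0,∞) → ℝ be differentiable functions satisfying ẋ(t) = −Γ(t)x(t) + ω(t)y(t), ẏ(t) = −ω(t)x(t) − Γ(t)y(t), ż(t) = −γ₊(t)z(t) + γ₋(t) and x(t)² + y(t)² + z(t)² ≤ 1 for all t ≥ 0. Then, as t → +∞, x(t) → 0, y(t) → 0, and z(t) → γ₋⁰/γ₊⁰ (the coherence vector converges to the equilibrium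 state (0, 0, γ₋⁰/γ₊⁰)). -/
/-!
Both `x² + y²` and `(z - γ₋⁰/γ₊⁰)²` satisfy, for every `ε > 0` and all large `t`, a differential
inequality `u' ≤ -k u + ε` with a fixed `k > 0`: the rotation by `ω` does not change `x² + y²`,
and for `z` the forcing term `γ₋ - γ₊ γ₋⁰/γ₊⁰` tends to `0` and is absorbed by Young's inequality.
Grönwall's inequality then gives `limsup u ≤ ε / k` for every `ε`, hence `u → 0`.
-/

open Filter Topology

theorem le_gronwallBound_of_hasDerivAt_le {u u' : ℝ → ℝ} {a K ε : ℝ}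
    (hu : ∀ t ≥ a, HasDerivAt u (u' t) t) (hle : ∀ t ≥ a, u' t ≤ K * u t + ε) :
    ∀ t ≥ a, u t ≤ gronwallBound (u a) K ε (t - a) := fun t ht =>
  le_gronwallBound_of_liminf_deriv_right_le (b := t)
    (fun s hs => (hu s hs.1).continuousAt.continuousWithinAt)
    (fun s hs _ hr => (hu s hs.1).hasDerivWithinAt.liminf_right_slope_le hr) le_rfl
    (fun s hs => hle s hs.1) t ⟨ht, le_rfl⟩

theorem tendsto_gronwallBound_atTop {δ K ε : ℝ} (hK : K < 0) :
    Tendsto (gronwallBound δ K ε) atTop (𝓝 (-ε / K)) := by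
  have hexp : Tendsto (fun s => Real.exp (K * s)) atTop (𝓝 0) :=
    Real.tendsto_exp_atBot.comp (tendsto_id.const_mul_atTop_of_neg hK)
  rw [gronwallBound_of_K_ne_0 hK.ne]
  convert (hexp.const_mul δ).add ((hexp.sub_const 1).const_mul (ε / K)) using 2
  ring

theorem tendsto_zero_of_hasDerivAt_le_neg_mul_add {u u' : ℝ → ℝ} {k : ℝ} (hk : 0 < k)
    (hu : ∀ᶠ t in atTop, HasDerivAt u (u' t) t) (hnonneg : ∀ᶠ t in atTop, 0 ≤ u t)
    (hle : ∀ ε > 0, ∀ᶠ t in atTop, u' t ≤ -k * u t + ε) :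
    Tendsto u atTop (𝓝 0) := by
  refine tendsto_order.2 ⟨fun c hc => hnonneg.mono fun t ht => hc.trans_le ht, fun c hc => ?_⟩
  obtain ⟨T, hT⟩ := eventually_atTop.1 (hu.and (hle (k * c / 2) (by positivity)))
  have hlim : Tendsto (fun t => gronwallBound (u T) (-k) (k * c / 2) (t - T)) atTop
      (𝓝 (c / 2)) := by
    convert (tendsto_gronwallBound_atTop (δ := u T) (ε := k * c / 2) (neg_lt_zero.2 hk)).comp
      (tendsto_atTop_add_const_right _ (-T) tendsto_id) using 2
    · simp [sub_eq_add_neg]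
    · field_simp
  filter_upwards [hlim.eventually (gt_mem_nhds (half_lt_self hc)), eventually_ge_atTop T]
    with t hlt ht
  exact (le_gronwallBound_of_hasDerivAt_le (fun s hs => (hT s hs).1) (fun s hs => (hT s hs).2)
    t ht).trans_lt hlt

theorem tendsto_zero_of_sq_le {ι : Type*} {l : Filter ι} {f g : ι → ℝ}
    (hg : Tendsto g l (𝓝 0)) (hfg : ∀ᶠ i in l, f i ^ 2 ≤ g i) : Tendsto f l (𝓝 0) := by
  have hsqrt : Tendsto (fun i => Real.sqrt (g i)) l (𝓝 0) := by
    simpa using hg.sqrt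
  refine squeeze_zero_norm' (hfg.mono fun i hi => ?_) hsqrt
  rw [Real.norm_eq_abs, ← Real.sqrt_sq_eq_abs]
  exact Real.sqrt_le_sqrt hi

theorem tendsto_div_of_hasDerivAt_neg_mul_add {u a b : ℝ → ℝ} {a₀ b₀ : ℝ} (ha₀ : 0 < a₀)
    (ha : Tendsto a atTop (𝓝 a₀)) (hb : Tendsto b atTop (𝓝 b₀))
    (hu : ∀ᶠ t in atTop, HasDerivAt u (-a t * u t + b t) t) :
    Tendsto u atTop (𝓝 (b₀ / a₀)) := by
  set L := b₀ / a₀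
  have hforcing : Tendsto (fun t => b t - a t * L) atTop (𝓝 0) := by
    convert hb.sub (ha.mul_const L) using 2
    simp only [L]
    field_simp
    ring
  have hsq : Tendsto (fun t => (u t - L) ^ 2) atTop (𝓝 0) := by
    refine tendsto_zero_of_hasDerivAt_le_neg_mul_add
      (u' := fun t => 2 * (u t - L) * (-a t * u t + b t)) ha₀
      (hu.mono fun t ht => ((ht.sub_const L).pow 2).congr_deriv (by ring))
      (.of_forall fun t => sq_nonneg _) fun ε hε => ?_
    have ha_large : ∀ᶠ t in atTop, 3 * a₀ / 4 < a t :=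
      ha.eventually (lt_mem_nhds (by linarith))
    have hforcing_small : ∀ᶠ t in atTop, (b t - a t * L) ^ 2 < a₀ * ε / 2 := by
      have hsmall : (0 : ℝ) ^ 2 < a₀ * ε / 2 := by rw [zero_pow two_ne_zero]; positivity
      exact (hforcing.pow 2).eventually (gt_mem_nhds hsmall)
    filter_upwards [ha_large, hforcing_small] with t hat het
    set v := u t - L
    set e := b t - a t * L
    have hsplit : -a t * u t + b t = -a t * v + e := by ring
    -- Young's inequality `2ve ≤ (a₀/2) v² + 2e²/a₀`
    have hyoung : 2 * v * e ≤ a₀ / 2 * v ^ 2 + ε := by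
      nlinarith [sq_nonneg (a₀ * v - 2 * e)]
    have hdamp : -2 * a t * v ^ 2 ≤ -(3 / 2) * a₀ * v ^ 2 := by
      nlinarith [sq_nonneg v]
    rw [hsplit]
    linarith
  simpa [sub_eq_zero] using
    (tendsto_zero_of_sq_le hsq (.of_forall fun t => le_rfl)).add_const L

theorem coherence_vector_tendsto_equilibrium_general
    (Γ ω γp γm : ℝ → ℝ)
    (Γ0 γp0 γm0 : ℝ) (hΓ0 : 0 < Γ0) (hγp0 : 0 < γp0)
    (hΓlim : Tendsto Γ atTop (nhds Γ0))
    (hγplim : Tendsto γp atTop (nhds γp0))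
    (hγmlim : Tendsto γm atTop (nhds γm0))
    (x y z : ℝ → ℝ)
    (hx : ∀ t ≥ (0 : ℝ), HasDerivAt x (-Γ t * x t + ω t * y t) t)
    (hy : ∀ t ≥ (0 : ℝ), HasDerivAt y (-ω t * x t - Γ t * y t) t)
    (hz : ∀ t ≥ (0 : ℝ), HasDerivAt z (-γp t * z t + γm t) t) :
    Tendsto x atTop (nhds 0) ∧ Tendsto y atTop (nhds 0) ∧
      Tendsto z atTop (nhds (γm0 / γp0)) := by
  have hr_deriv : ∀ t ≥ (0 : ℝ), HasDerivAt (fun t => x t ^ 2 + y t ^ 2)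
      (-(2 * Γ t) * (x t ^ 2 + y t ^ 2) + 0) t := fun t ht =>
    (((hx t ht).pow 2).add ((hy t ht).pow 2)).congr_deriv (by ring)
  have hr : Tendsto (fun t => x t ^ 2 + y t ^ 2) atTop (𝓝 0) := by
    simpa using tendsto_div_of_hasDerivAt_neg_mul_add (mul_pos two_pos hΓ0)
      (hΓlim.const_mul 2) tendsto_const_nhds ((eventually_ge_atTop 0).mono hr_deriv)
  exact ⟨tendsto_zero_of_sq_le hr (.of_forall fun t => le_add_of_nonneg_right (sq_nonneg _)),
    tendsto_zero_of_sq_le hr (.of_forall fun t => le_add_of_nonneg_left (sq_nonneg _)),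
    tendsto_div_of_hasDerivAt_neg_mul_add hγp0 hγplim hγmlim ((eventually_ge_atTop 0).mono hz)⟩

/-- If the decay rates converge with positive limits `Γ⁰ > 0` and `γ₊⁰ > 0`, the
coherence vector of a two-level open quantum system converges to the equilibrium
state `(0, 0, γ₋⁰/γ₊⁰)`. -/
theorem coherence_vector_tendsto_equilibrium
    (Γ ω γp γm : ℝ → ℝ)
    (hΓc : ContinuousOn Γ (Set.Ici 0)) (hωc : ContinuousOn ω (Set.Ici 0))
    (hγpc : ContinuousOn γp (Set.Ici 0)) (hγmc : ContinuousOn γm (Set.Ici 0))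
    (Γ0 γp0 γm0 : ℝ) (hΓ0 : 0 < Γ0) (hγp0 : 0 < γp0)
    (hΓlim : Tendsto Γ atTop (nhds Γ0))
    (hγplim : Tendsto γp atTop (nhds γp0))
    (hγmlim : Tendsto γm atTop (nhds γm0))
    (x y z : ℝ → ℝ)
    (hx : ∀ t ≥ (0 : ℝ), HasDerivAt x (-Γ t * x t + ω t * y t) t)
    (hy : ∀ t ≥ (0 : ℝ), HasDerivAt y (-ω t * x t - Γ t * y t) t)
    (hz : ∀ t ≥ (0 : ℝ), HasDerivAt z (-γp t * z t + γm t) t)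
    (hball : ∀ t ≥ (0 : ℝ), x t ^ 2 + y t ^ 2 + z t ^ 2 ≤ 1) :
    Tendsto x atTop (nhds 0) ∧ Tendsto y atTop (nhds 0) ∧
      Tendsto z atTop (nhds (γm0 / γp0)) :=
  coherence_vector_tendsto_equilibrium_general Γ ω γp γm Γ0 γp0 γm0 hΓ0 hγp0 hΓlim hγplim hγmlim x y
    z hx hy hz
end

section
/- Let a, b, s be real numbers with 0 ≤ b and 2b < a, and define Q(w) = (e^{−2a} − e^{−2b})w² + 2se^{−a}w + s² − 1 + e^{−2b}. Then Q(w) ≤ 0 for all w ∈ [−1, 1] if and only if s² ≤ (1 − e^{−2b})(1 − e^{−2(a−b)}). -/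
/-- In the regime `γ̃₊ > 2Γ̃`, the quadratic
`Q(w) = (e^{-2a} - e^{-2b}) w² + 2 s e^{-a} w + s² - 1 + e^{-2b}` is nonpositive on
`[-1, 1]` iff `s² ≤ (1 - e^{-2b})(1 - e^{-2(a-b)})`. -/
theorem quadratic_nonpos_iff (a b s : ℝ) (hb : 0 ≤ b) (hab : 2 * b < a) :
    (∀ w ∈ Set.Icc (-1 : ℝ) 1,
      (Real.exp (-(2 * a)) - Real.exp (-(2 * b))) * w ^ 2 +
        2 * s * Real.exp (-a) * w + s ^ 2 - 1 + Real.exp (-(2 * b)) ≤ 0) ↔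
    s ^ 2 ≤ (1 - Real.exp (-(2 * b))) * (1 - Real.exp (-(2 * (a - b)))) := by
  set x := Real.exp (-a) with hxdef
  set v := Real.exp (-(2 * b)) with hvdef
  have hx : 0 < x := Real.exp_pos _
  have hv : 0 < v := Real.exp_pos _
  have hv1 : v ≤ 1 := Real.exp_le_one_iff.mpr (by linarith)
  have hxv : x < v := Real.exp_lt_exp.mpr (by linarith)
  have e2a : Real.exp (-(2 * a)) = x ^ 2 := by
    rw [hxdef, pow_two, ← Real.exp_add]; ring_nf
  have e2ab : Real.exp (-(2 * (a - b))) = x ^ 2 / v := by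
    rw [← e2a, hvdef, ← Real.exp_sub]; ring_nf
  have hA : 0 < v - x ^ 2 := by nlinarith
  simp only [e2a, e2ab]
  have hRHS : (1 - v) * (1 - x ^ 2 / v) = (1 - v) * (v - x ^ 2) / v := by
    field_simp
  rw [hRHS, le_div_iff₀ hv]
  constructor
  · intro h
    rcases le_or_gt (|s| * x) (v - x ^ 2) with hle | hgt
    · -- vertex inside [-1,1]
      set w := s * x / (v - x ^ 2) with hwdef
      have hw : w ∈ Set.Icc (-1 : ℝ) 1 := by
        constructor
        · rw [hwdef, le_div_iff₀ hA]
          have : -(|s| * x) ≤ s * x := by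
            have := neg_abs_le s
            nlinarith
          linarith
        · rw [hwdef, div_le_one hA]
          have : s * x ≤ |s| * x := by
            have := le_abs_self s
            nlinarith
          linarith
      have hQ := h w hw
      have hQ' : (x ^ 2 - v) * w ^ 2 + 2 * s * x * w + s ^ 2 - 1 + v
          = s ^ 2 * x ^ 2 / (v - x ^ 2) + s ^ 2 - 1 + v := by
        rw [hwdef]; field_simp; ring
      rw [hQ'] at hQ
      have hQ'' : s ^ 2 * x ^ 2 / (v - x ^ 2) ≤ 1 - v - s ^ 2 := by linarith
      rw [div_le_iff₀ hA] at hQ''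
      nlinarith
    · -- vertex outside: contradiction
      rcases le_or_gt 0 s with hs0 | hs0
      · rw [abs_of_nonneg hs0] at hgt
        have hs1 : 1 - x < s := by nlinarith
        have hQ1 := h 1 ⟨by norm_num, le_rfl⟩
        nlinarith
      · rw [abs_of_neg hs0] at hgt
        have hs1 : 1 - x < -s := by nlinarith
        have hQ1 := h (-1) ⟨le_rfl, by norm_num⟩
        nlinarith
  · intro hs w _
    nlinarith [sq_nonneg ((v - x ^ 2) * w - s * x), mul_pos hA hA]
end

section
/- For all t > 0, the eternal non-Markovianity model with γ̃₊(t) = 2t, Γ̃(t) = t − ln(cosh t) and s(t) = 0 satisfies Γ̃(t) < γ̃₊(t)/2 (so the system is never quasi-Markovian), and yet the complete positivity condition holds: 0 ≤ (1 + e^{−γ̃₊(t)})² − 4e^{−2Γ̃(t)}, i.e., 4e^{−2t}cosh²(t) ≤ (1 + e^{−2t})². -/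
/-- The eternal non-Markovianity model, with `γ̃₊(t) = 2t`,
`Γ̃(t) = t - ln(cosh t)` and `s(t) = 0`, is never quasi-Markovian
(`Γ̃ < γ̃₊/2` for all `t > 0`) yet satisfies the complete positivity condition
`0 ≤ (1 + e^{-γ̃₊})² - 4 e^{-2Γ̃}`, i.e. `4 e^{-2t} cosh² t ≤ (1 + e^{-2t})²`. -/
theorem eternal_non_markovianity (t : ℝ) (ht : 0 < t) :
    t - Real.log (Real.cosh t) < 2 * t / 2 ∧
    0 ≤ (1 + Real.exp (-(2 * t))) ^ 2 -
        4 * Real.exp (-(2 * (t - Real.log (Real.cosh t)))) ∧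
    4 * Real.exp (-(2 * t)) * Real.cosh t ^ 2 ≤ (1 + Real.exp (-(2 * t))) ^ 2 := by
  have hcosh_pos : 0 < Real.cosh t := Real.cosh_pos t
  have h1 : 1 < Real.cosh t := Real.one_lt_cosh.mpr ht.ne'
  -- key identity: 4 e^{-2t} cosh² t = (1 + e^{-2t})²
  have hkey : 4 * Real.exp (-(2 * t)) * Real.cosh t ^ 2
      = (1 + Real.exp (-(2 * t))) ^ 2 := by
    have hc : Real.cosh t = (Real.exp t + Real.exp (-t)) / 2 := Real.cosh_eq t
    have h2 : Real.exp (-(2 * t)) = Real.exp (-t) ^ 2 := by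
      rw [← Real.exp_nat_mul]; ring_nf
    have h3 : Real.exp (-t) * Real.exp t = 1 := by
      rw [← Real.exp_add]; simp
    rw [hc, h2]; ring_nf; nlinarith [h3]
  have hexp : Real.exp (-(2 * (t - Real.log (Real.cosh t))))
      = Real.exp (-(2 * t)) * Real.cosh t ^ 2 := by
    have : -(2 * (t - Real.log (Real.cosh t)))
        = -(2 * t) + 2 * Real.log (Real.cosh t) := by ring
    rw [this, Real.exp_add]
    congr 1
    rw [show (2 : ℝ) * Real.log (Real.cosh t) = (2 : ℕ) * Real.log (Real.cosh t) by norm_num,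
      Real.exp_nat_mul, Real.exp_log hcosh_pos]
  refine ⟨?_, ?_, hkey.le⟩
  · have := Real.log_pos h1
    linarith
  · rw [hexp]; nlinarith [hkey]
end

section
/- Let α ∈ [0, 1] and define s(t) = α(1 − (1 − t)e^{−t}) for t ≥ 0. Then |s(t)| ≤ 1 − e^{−t} for all t ≥ 0 if and only if α ≤ 1/2. -/
/-- For the parametric model with `s(t) = α(1 - (1 - t) e^{-t})` and `γ̃₊(t) = t`,
the condition `|s(t)| ≤ 1 - e^{-t}` holds for all `t ≥ 0` iff `α ≤ 1/2`. -/
theorem parametric_model_qm_iff (α : ℝ) (hα : α ∈ Set.Icc (0 : ℝ) 1) :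
    (∀ t ≥ (0 : ℝ),
      |α * (1 - (1 - t) * Real.exp (-t))| ≤ 1 - Real.exp (-t)) ↔ α ≤ 1 / 2 := by
  obtain ⟨hα0, hα1⟩ := hα
  constructor
  · intro h
    by_contra hc
    push_neg at hc
    set t : ℝ := (2 * α - 1) / 2 with ht
    have ht0 : 0 < t := by rw [ht]; linarith
    have hE : (1 : ℝ) - t ≤ Real.exp (-t) := by
      have := Real.add_one_le_exp (-t); linarith
    have hE0 : 0 < Real.exp (-t) := Real.exp_pos _
    have hspec := h t ht0.le
    have habs : α * (1 - (1 - t) * Real.exp (-t)) ≤ 1 - Real.exp (-t) :=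
      le_trans (le_abs_self _) hspec
    -- rearranged: α - 1 + exp(-t)*(1 - α + α*t) ≤ 0, but exp(-t) ≥ 1 - t gives contradiction
    have hcoef : 0 ≤ 1 - α + α * t := by nlinarith
    have key : (1 - t) * (1 - α + α * t) ≤ 1 - α := by
      nlinarith [mul_nonneg (sub_nonneg.mpr hE) hcoef]
    rw [ht] at key
    nlinarith [mul_pos (mul_pos (show (0:ℝ) < α - 1/2 by linarith)
      (show (0:ℝ) < α - 1/2 by linarith)) (show (0:ℝ) < 2 - α by linarith)]
  · intro hhalf t ht
    have hE0 : 0 < Real.exp (-t) := Real.exp_pos _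
    have hE1 : (1 + t) * Real.exp (-t) ≤ 1 := by
      have hinv : Real.exp (-t) * Real.exp t = 1 := by
        rw [← Real.exp_add]; simp
      nlinarith [mul_le_mul_of_nonneg_right (Real.add_one_le_exp t) hE0.le]
    have hs0 : 0 ≤ α * (1 - (1 - t) * Real.exp (-t)) := by
      have : (1 - t) * Real.exp (-t) ≤ (1 + t) * Real.exp (-t) := by nlinarith
      nlinarith
    rw [abs_of_nonneg hs0]
    nlinarith [mul_nonneg ht hE0.le]
end
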